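/- Let (A, μ) be a supercommutative associative superalgebra, α : A → A an even algebra morphism, and D : A → A an even derivation with Dα = αD. Then A with the product x * y = α(x·D(y)) and twisting map α is a Hom-Novikov superalgebra. -/
import Mathlib


/-- The product `x * y = α (x · D(y))`. -/
def adprod {𝕜 A : Type*} [Field 𝕜] [AddCommGroup A] [Module 𝕜 A]
    (α : A →ₗ[𝕜] A) (mul : A →ₗ[𝕜] A →ₗ[𝕜] A) (D : A →ₗ[𝕜] A) (x y : A) : A :=
  α (mul x (D y))

theorem stmt4
    (𝕜 A : Type*) [Field 𝕜] [AddCommGroup A] [Module 𝕜 A]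
    (G : ZMod 2 → Submodule 𝕜 A) (hG : DirectSum.IsInternal G)
    (mul : A →ₗ[𝕜] A →ₗ[𝕜] A)
    (hmul_even : ∀ i j : ZMod 2, ∀ x ∈ G i, ∀ y ∈ G j, mul x y ∈ G (i + j))
    (hassoc : ∀ x y z : A, mul (mul x y) z = mul x (mul y z))
    (hcomm : ∀ i j : ZMod 2, ∀ x ∈ G i, ∀ y ∈ G j,
      mul x y = ((-1 : 𝕜) ^ (i.val * j.val)) • mul y x)
    (α : A →ₗ[𝕜] A)
    (hα_even : ∀ i : ZMod 2, ∀ x ∈ G i, α x ∈ G i)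
    (hα_mul : ∀ x y : A, α (mul x y) = mul (α x) (α y))
    (D : A →ₗ[𝕜] A)
    (hD_even : ∀ i : ZMod 2, ∀ x ∈ G i, D x ∈ G i)
    (hD : ∀ x y : A, D (mul x y) = mul (D x) y + mul x (D y))
    (hDα : ∀ x : A, D (α x) = α (D x)) :
    (∀ i j : ZMod 2, ∀ x ∈ G i, ∀ y ∈ G j, adprod α mul D x y ∈ G (i + j)) ∧
    (∀ x y : A, α (adprod α mul D x y) = adprod α mul D (α x) (α y)) ∧
    (∀ i j k : ZMod 2, ∀ x ∈ G i, ∀ y ∈ G j, ∀ z ∈ G k,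
      adprod α mul D (adprod α mul D x y) (α z)
          - adprod α mul D (α x) (adprod α mul D y z)
        = ((-1 : 𝕜) ^ (i.val * j.val)) •
            (adprod α mul D (adprod α mul D y x) (α z)
              - adprod α mul D (α y) (adprod α mul D x z))) ∧
    (∀ i j k : ZMod 2, ∀ x ∈ G i, ∀ y ∈ G j, ∀ z ∈ G k,
      adprod α mul D (adprod α mul D x y) (α z)
        = ((-1 : 𝕜) ^ (j.val * k.val)) • adprod α mul D (adprod α mul D x z) (α y)) := by

  have key : ∀ a b c : A, adprod α mul D (adprod α mul D a b) (α c)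
      - adprod α mul D (α a) (adprod α mul D b c)
      = - α (α (mul a (mul b (D (D c))))) := by
    intro a b c
    simp only [adprod, hDα, ← hα_mul, hD, map_add, hassoc]
    abel
  refine ⟨?_, ?_, ?_, ?_⟩
  · intro i j x hx y hy
    exact hα_even _ _ (hmul_even i j x hx _ (hD_even j y hy))
  · intro x y
    simp only [adprod, hα_mul, hDα]
  · intro i j k x hx y hy z hz
    rw [key, key]
    have h1 : mul y (mul x (D (D z))) = ((-1 : 𝕜) ^ (j.val * i.val)) •
        mul x (mul y (D (D z))) := by
      rw [← hassoc, ← hassoc, hcomm j i y hy x hx, LinearMap.map_smul₂]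
    rw [h1, map_smul, map_smul, smul_neg, smul_smul, Nat.mul_comm j.val i.val, ← pow_add,
      Even.neg_one_pow ⟨i.val * j.val, rfl⟩, one_smul]
  · intro i j k x hx y hy z hz
    simp only [adprod, hDα, ← hα_mul, hassoc]
    rw [hcomm j k (D y) (hD_even j y hy) (D z) (hD_even k z hz), map_smul, map_smul,
      map_smul, ← hassoc]
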